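/- Let f: ℝ^d → ℝ be L₀-Lipschitz. For any fixed points x_t, x_{t-1} ∈ ℝ^d and independent standard Gaussians u_t, u_{t-1} in ℝ^d (with u_t independent of x_t - x_{t-1}), the residual estimator g̃ = (u_t/δ)(f(x_t + δu_t) - f(x_{t-1} + δu_{t-1})) satisfies E[‖g̃‖²] ≤ (2d L₀²/δ²) E[‖x_t - x_{t-1}‖²] + 8 L₀² (d+4)². -/

import Mathlib

/-!
Insert `f (x_{t-1} + δ u_t)`: the first difference is at most `L₀ ‖x_t - x_{t-1}‖` and the second
at most `L₀ δ ‖u_t - u_{t-1}‖`, so `(a + b)² ≤ 2a² + 2b²` bounds `‖g̃‖²` by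
`2L₀²/δ² ‖x_t - x_{t-1}‖² ‖u_t‖² + 2L₀² ‖u_t - u_{t-1}‖² ‖u_t‖²`. Since `u_{t-1}` is centred and
independent of `u_t`, `E ‖u_t - u_{t-1}‖² ‖u_t‖² = E ‖u_t‖⁴ + (E ‖u_t‖²)² ≤ 3d² + d²`, where
`E ‖u‖⁴ ≤ d ∑ E u_i⁴ = 3d²` by Cauchy–Schwarz and Stein's identity `E X^(k+2) = (k+1) E X^k`.
-/

open MeasureTheory ProbabilityTheory

noncomputable def stdGaussian (d : ℕ) : Measure (EuclideanSpace ℝ (Fin d)) :=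
  (Measure.pi fun _ : Fin d => gaussianReal 0 1).map
    ⇑(EuclideanSpace.equiv (Fin d) ℝ).symm

open Real

section MixedMoments

variable {E : Type*} [NormedAddCommGroup E] [MeasurableSpace E]
  {μ ν : Measure E} [IsProbabilityMeasure μ] [IsProbabilityMeasure ν]

lemma integrable_norm_sub_sq_mul_norm_sq [BorelSpace E] [SecondCountableTopology E]
    (hμ : MemLp id 4 μ) (hν : MemLp id 2 ν) :
    Integrable (fun p : E × E => ‖p.1 - p.2‖ ^ 2 * ‖p.1‖ ^ 2) (μ.prod ν) := by
  have h4 : Integrable (fun u => ‖u‖ ^ 4) μ := hμ.integrable_norm_pow four_ne_zero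
  have h2 : Integrable (fun u => ‖u‖ ^ 2) μ :=
    (hμ.mono_exponent (by norm_num)).integrable_norm_pow two_ne_zero
  refine Integrable.mono' (((h4.comp_fst ν).const_mul 2).add
      ((h2.mul_prod (hν.integrable_norm_pow two_ne_zero)).const_mul 2))
    (by fun_prop) (ae_of_all _ fun p => ?_)
  have : ‖p.1 - p.2‖ ^ 2 ≤ 2 * ‖p.1‖ ^ 2 + 2 * ‖p.2‖ ^ 2 := by
    nlinarith [norm_sub_le p.1 p.2, norm_nonneg (p.1 - p.2), sq_nonneg (‖p.1‖ - ‖p.2‖)]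
  simp only [Pi.add_apply, id, norm_mul, norm_pow, norm_norm]
  nlinarith [sq_nonneg ‖p.1‖]

variable [InnerProductSpace ℝ E] [CompleteSpace E]

lemma integral_norm_sub_sq_of_integral_id_eq_zero (hν : MemLp id 2 ν) (hc : ∫ v, v ∂ν = 0)
    (u : E) : ∫ v, ‖u - v‖ ^ 2 ∂ν = ‖u‖ ^ 2 + ∫ v, ‖v‖ ^ 2 ∂ν := by
  have hid : Integrable (fun v => v) ν := hν.integrable one_le_two
  have hinner : Integrable (fun v => 2 * inner ℝ u v) ν := (hid.const_inner u).const_mul 2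
  have hlin : Integrable (fun v => ‖u‖ ^ 2 - 2 * inner ℝ u v) ν := (integrable_const _).sub hinner
  have hsq : Integrable (fun v => ‖v‖ ^ 2) ν := hν.integrable_norm_pow two_ne_zero
  simp_rw [norm_sub_sq_real]
  rw [integral_add hlin hsq, integral_sub (integrable_const _) hinner, integral_const_mul,
    integral_inner hid u]
  simp [hc]

lemma integral_norm_sub_sq_mul_norm_sq [BorelSpace E] [SecondCountableTopology E]
    (hμ : MemLp id 4 μ) (hν : MemLp id 2 ν) (hc : ∫ v, v ∂ν = 0) :
    ∫ p : E × E, ‖p.1 - p.2‖ ^ 2 * ‖p.1‖ ^ 2 ∂(μ.prod ν) =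
      ∫ u, ‖u‖ ^ 4 ∂μ + (∫ u, ‖u‖ ^ 2 ∂μ) * ∫ v, ‖v‖ ^ 2 ∂ν := by
  have h4 : Integrable (fun u => ‖u‖ ^ 4) μ := hμ.integrable_norm_pow four_ne_zero
  have h2 : Integrable (fun u => ‖u‖ ^ 2) μ :=
    (hμ.mono_exponent (by norm_num)).integrable_norm_pow two_ne_zero
  have hexpand (u : E) : (‖u‖ ^ 2 + ∫ v, ‖v‖ ^ 2 ∂ν) * ‖u‖ ^ 2 =
      ‖u‖ ^ 4 + (∫ v, ‖v‖ ^ 2 ∂ν) * ‖u‖ ^ 2 := by ring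
  rw [integral_prod _ (integrable_norm_sub_sq_mul_norm_sq hμ hν)]
  simp_rw [integral_mul_const, integral_norm_sub_sq_of_integral_id_eq_zero hν hc, hexpand]
  rw [integral_add h4 (h2.const_mul _), integral_const_mul, mul_comm]

end MixedMoments

namespace ProbabilityTheory

lemma integrable_pow_gaussianReal (μ : ℝ) (v : NNReal) (n : ℕ) :
    Integrable (fun x => x ^ n) (gaussianReal μ v) :=
  (integrable_norm_iff (by fun_prop)).1 <| by
    simpa using (memLp_id_gaussianReal (μ := μ) (v := v) n).integrable_norm_pow'

lemma integrable_gaussianPDFReal_mul_pow (n : ℕ) :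
    Integrable (fun x => gaussianPDFReal 0 1 x * x ^ n) := by
  have h := integrable_pow_gaussianReal 0 1 n
  rw [gaussianReal_of_var_ne_zero _ one_ne_zero,
    integrable_withDensity_iff_integrable_smul' (measurable_gaussianPDF _ _)
      (ae_of_all _ fun _ => gaussianPDF_lt_top)] at h
  simpa only [toReal_gaussianPDF, smul_eq_mul] using h

lemma hasDerivAt_gaussianPDFReal_zero_one (x : ℝ) :
    HasDerivAt (gaussianPDFReal 0 1) (-x * gaussianPDFReal 0 1 x) x := by
  have hφ : gaussianPDFReal 0 1 = fun x => (√(2 * π))⁻¹ * exp (-x ^ 2 / 2) := by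
    ext; simp [gaussianPDFReal_def]
  have h : HasDerivAt (fun x : ℝ => -x ^ 2 / 2) (-x) x :=
    ((hasDerivAt_pow 2 x).neg.div_const 2).congr_deriv (by ring)
  rw [hφ]
  exact (h.exp.const_mul _).congr_deriv (by ring)

lemma integral_pow_add_two_gaussianReal (k : ℕ) :
    ∫ x, x ^ (k + 2) ∂gaussianReal 0 1 = (k + 1) * ∫ x, x ^ k ∂gaussianReal 0 1 := by
  simp only [integral_gaussianReal_eq_integral_smul one_ne_zero, smul_eq_mul]
  have hderiv (x : ℝ) : HasDerivAt (fun x => gaussianPDFReal 0 1 x * x ^ (k + 1))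
      ((k + 1) * (gaussianPDFReal 0 1 x * x ^ k) - gaussianPDFReal 0 1 x * x ^ (k + 2)) x :=
    ((hasDerivAt_gaussianPDFReal_zero_one x).mul (hasDerivAt_pow (k + 1) x)).congr_deriv
      (by push_cast; ring)
  have hk := (integrable_gaussianPDFReal_mul_pow k).const_mul ((k : ℝ) + 1)
  have hk2 := integrable_gaussianPDFReal_mul_pow (k + 2)
  have h := integral_eq_zero_of_hasDerivAt_of_integrable hderiv (hk.sub hk2)
    (integrable_gaussianPDFReal_mul_pow (k + 1))
  rw [integral_sub hk hk2, integral_const_mul] at h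
  linarith

lemma integral_sq_gaussianReal : ∫ x, x ^ 2 ∂gaussianReal 0 1 = 1 := by
  simpa using integral_pow_add_two_gaussianReal 0

lemma integral_pow_four_gaussianReal : ∫ x, x ^ 4 ∂gaussianReal 0 1 = 3 := by
  rw [integral_pow_add_two_gaussianReal 2, integral_sq_gaussianReal]
  norm_num

section StdGaussian

variable {ι : Type*} [Fintype ι]

lemma integrable_pow_eval_pi_gaussianReal (n : ℕ) (i : ι) :
    Integrable (fun x => x i ^ n) (Measure.pi fun _ : ι => gaussianReal 0 1) :=
  integrable_comp_eval (μ := fun _ => gaussianReal 0 1) (f := fun t : ℝ => t ^ n)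
    (integrable_pow_gaussianReal 0 1 n)

lemma integral_pow_eval_pi_gaussianReal (n : ℕ) (i : ι) :
    ∫ x, x i ^ n ∂Measure.pi (fun _ : ι => gaussianReal 0 1) = ∫ t, t ^ n ∂gaussianReal 0 1 :=
  integral_comp_eval (μ := fun _ => gaussianReal 0 1) (f := fun t : ℝ => t ^ n) (by fun_prop)

lemma integral_norm_sq_stdGaussian :
    ∫ x, ‖x‖ ^ 2 ∂stdGaussian (EuclideanSpace ℝ ι) = Fintype.card ι := by
  rw [← map_pi_eq_stdGaussian, integral_map (by fun_prop) (by fun_prop)]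
  simp_rw [EuclideanSpace.real_norm_sq_eq]
  rw [integral_finsetSum _ fun i _ => integrable_pow_eval_pi_gaussianReal 2 i]
  simp [integral_pow_eval_pi_gaussianReal, integral_sq_gaussianReal]

lemma integral_norm_pow_four_stdGaussian_le :
    ∫ x, ‖x‖ ^ 4 ∂stdGaussian (EuclideanSpace ℝ ι) ≤ 3 * Fintype.card ι ^ 2 := by
  rw [← map_pi_eq_stdGaussian, integral_map (by fun_prop) (by fun_prop)]
  have hsum : Integrable (fun x : ι → ℝ => ∑ i, x i ^ 4) (Measure.pi fun _ => gaussianReal 0 1) :=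
    integrable_finsetSum _ fun i _ => integrable_pow_eval_pi_gaussianReal 4 i
  calc ∫ x, ‖WithLp.toLp 2 x‖ ^ 4 ∂Measure.pi (fun _ : ι => gaussianReal 0 1)
      ≤ ∫ x, Fintype.card ι * ∑ i, x i ^ 4 ∂Measure.pi (fun _ : ι => gaussianReal 0 1) := by
        refine integral_mono_of_nonneg (ae_of_all _ fun x => by positivity) (hsum.const_mul _)
          (ae_of_all _ fun x => ?_)
        have h := sq_sum_le_card_mul_sum_sq (s := Finset.univ) (f := fun i => x i ^ 2)
        simpa [pow_mul_comm, ← pow_mul, ← EuclideanSpace.real_norm_sq_eq] using h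
    _ = 3 * Fintype.card ι ^ 2 := by
        rw [integral_const_mul, integral_finsetSum _ fun i _ =>
          integrable_pow_eval_pi_gaussianReal 4 i]
        simp [integral_pow_eval_pi_gaussianReal, integral_pow_four_gaussianReal]
        ring

lemma integral_norm_sub_sq_mul_norm_sq_stdGaussian_le :
    ∫ p : EuclideanSpace ℝ ι × EuclideanSpace ℝ ι, ‖p.1 - p.2‖ ^ 2 * ‖p.1‖ ^ 2
        ∂(stdGaussian (EuclideanSpace ℝ ι)).prod (stdGaussian (EuclideanSpace ℝ ι)) ≤
      4 * Fintype.card ι ^ 2 := by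
  rw [integral_norm_sub_sq_mul_norm_sq (IsGaussian.memLp_id _ 4 (by norm_num))
    IsGaussian.memLp_two_id integral_id_stdGaussian, integral_norm_sq_stdGaussian]
  linarith [integral_norm_pow_four_stdGaussian_le (ι := ι)]

end StdGaussian

end ProbabilityTheory

lemma norm_residual_feedback_sq_le {E : Type*} [NormedAddCommGroup E] [NormedSpace ℝ E]
    {f : E → ℝ} {L δ : ℝ} (hδ : 0 < δ) (hf : ∀ x y, |f x - f y| ≤ L * ‖x - y‖) (x y u v : E) :
    ‖(δ⁻¹ * (f (x + δ • u) - f (y + δ • v))) • u‖ ^ 2 ≤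
      2 * L ^ 2 / δ ^ 2 * ‖x - y‖ ^ 2 * ‖u‖ ^ 2 + 2 * L ^ 2 * (‖u - v‖ ^ 2 * ‖u‖ ^ 2) := by
  have hsq (a b : E) : (f a - f b) ^ 2 ≤ L ^ 2 * ‖a - b‖ ^ 2 := by
    rw [← sq_abs, ← mul_pow]
    exact pow_le_pow_left₀ (abs_nonneg _) (hf a b) 2
  have hshift := hsq (x + δ • u) (y + δ • u)
  have hperturb := hsq (y + δ • u) (y + δ • v)
  rw [add_sub_add_right_eq_sub] at hshift
  rw [add_sub_add_left_eq_sub, ← smul_sub, norm_smul, norm_of_nonneg hδ.le] at hperturb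
  rw [norm_smul, norm_mul, norm_inv, norm_of_nonneg hδ.le, norm_eq_abs, mul_pow, mul_pow, sq_abs]
  calc (δ⁻¹ ^ 2 * (f (x + δ • u) - f (y + δ • v)) ^ 2) * ‖u‖ ^ 2
      ≤ (δ⁻¹ ^ 2 * (2 * (L ^ 2 * ‖x - y‖ ^ 2) + 2 * (L ^ 2 * (δ * ‖u - v‖) ^ 2))) * ‖u‖ ^ 2 := by
        gcongr
        nlinarith [sq_nonneg (f (x + δ • u) - f (y + δ • u) - (f (y + δ • u) - f (y + δ • v)))]
    _ = _ := by field_simp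

lemma stdGaussian_eq_stdGaussian_euclideanSpace (d : ℕ) :
    _root_.stdGaussian d = ProbabilityTheory.stdGaussian (EuclideanSpace ℝ (Fin d)) :=
  map_pi_eq_stdGaussian

/-- Second-moment bound for the deterministic residual-feedback estimator,
with the two Gaussian perturbations `u_t, u_{t-1}` independent (modeled via the
product of two standard Gaussian measures). -/
theorem residual_feedback_second_moment
    (d : ℕ) (f : EuclideanSpace ℝ (Fin d) → ℝ) (L₀ δ : ℝ) (hδ : 0 < δ)
    (hf : ∀ x y, |f x - f y| ≤ L₀ * ‖x - y‖)
    (xt xprev : EuclideanSpace ℝ (Fin d)) :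
    ∫ p : EuclideanSpace ℝ (Fin d) × EuclideanSpace ℝ (Fin d),
        ‖(δ⁻¹ * (f (xt + δ • p.1) - f (xprev + δ • p.2))) • p.1‖ ^ 2
        ∂((stdGaussian d).prod (stdGaussian d)) ≤
      2 * d * L₀ ^ 2 / δ ^ 2 * ‖xt - xprev‖ ^ 2 + 8 * L₀ ^ 2 * ((d : ℝ) + 4) ^ 2 := by
  rw [stdGaussian_eq_stdGaussian_euclideanSpace]
  set γ := ProbabilityTheory.stdGaussian (EuclideanSpace ℝ (Fin d))
  set A := 2 * L₀ ^ 2 / δ ^ 2 * ‖xt - xprev‖ ^ 2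
  have hsq : Integrable (fun u => ‖u‖ ^ 2) γ :=
    IsGaussian.memLp_two_id.integrable_norm_pow two_ne_zero
  have hmixed := integrable_norm_sub_sq_mul_norm_sq (IsGaussian.memLp_id γ 4 (by norm_num))
    (IsGaussian.memLp_two_id (μ := γ))
  calc _ ≤ ∫ p : EuclideanSpace ℝ (Fin d) × EuclideanSpace ℝ (Fin d),
        A * ‖p.1‖ ^ 2 + 2 * L₀ ^ 2 * (‖p.1 - p.2‖ ^ 2 * ‖p.1‖ ^ 2) ∂γ.prod γ :=
        integral_mono_of_nonneg (ae_of_all _ fun _ => by positivity)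
          (((hsq.comp_fst γ).const_mul A).add (hmixed.const_mul _))
          (ae_of_all _ fun p => norm_residual_feedback_sq_le hδ hf xt xprev p.1 p.2)
    _ = A * d + 2 * L₀ ^ 2 * ∫ p : EuclideanSpace ℝ (Fin d) × EuclideanSpace ℝ (Fin d),
        ‖p.1 - p.2‖ ^ 2 * ‖p.1‖ ^ 2 ∂γ.prod γ := by
        rw [integral_add ((hsq.comp_fst γ).const_mul A) (hmixed.const_mul _), integral_const_mul,
          integral_const_mul, integral_fun_fst (fun u => ‖u‖ ^ 2), integral_norm_sq_stdGaussian]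
        simp
    _ ≤ A * d + 2 * L₀ ^ 2 * (4 * d ^ 2) := by
        gcongr
        simpa using integral_norm_sub_sq_mul_norm_sq_stdGaussian_le (ι := Fin d)
    _ ≤ _ := by
        have hd : (d : ℝ) ^ 2 ≤ (d + 4) ^ 2 := by gcongr; linarith
        simp only [A]
        linear_combination 8 * mul_le_mul_of_nonneg_left hd (sq_nonneg L₀)
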